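/- Let (H, K, ◇) be a Takeuchi pair of bialgebras over a field k. Then the restriction of ◇ to P(H) ⊗ K descends through the quotient K → Q(K) = ker(ε_K)/ker(ε_K)² (precomposed with h ↦ h − ε(h)1 if needed), yielding a well-defined pairing ev : P(H) ⊗ Q(K) → k satisfying ev([a,b] ⊗ q) = Σ ev(a ⊗ q⁽¹⁾) ev(b ⊗ q⁽²⁾), where the cobracket on Q(K) is induced by Δ − τΔ. That is, (P(H), Q(K), ev) is a Michaelis pair. -/

import Mathlib

open TensorProduct Coalgebra

variable {k : Type*} [Field k]

/-- The cyclic permutation `ξ(x ⊗ y ⊗ z) = z ⊗ x ⊗ y` on `Q ⊗ (Q ⊗ Q)`. -/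
noncomputable def cyc {Q : Type*} [AddCommGroup Q] [Module k Q] :
    Q ⊗[k] (Q ⊗[k] Q) →ₗ[k] Q ⊗[k] (Q ⊗[k] Q) :=
  (TensorProduct.comm k (Q ⊗[k] Q) Q).toLinearMap ∘ₗ
    (TensorProduct.assoc k Q Q Q).symm.toLinearMap

/-- The submodule of primitive elements of a bialgebra. -/
noncomputable def primitives (k H : Type*) [Field k] [Ring H] [Bialgebra k H] :
    Submodule k H where
  carrier := {x : H | comul (R := k) x = x ⊗ₜ[k] (1 : H) + (1 : H) ⊗ₜ[k] x}
  add_mem' := by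
    intro a b ha hb
    simp only [Set.mem_setOf_eq] at *
    rw [map_add, ha, hb, add_tmul, tmul_add]
    abel
  zero_mem' := by simp
  smul_mem' := by
    intro c x hx
    simp only [Set.mem_setOf_eq] at *
    rw [map_smul, hx, smul_add, smul_tmul', tmul_smul, smul_tmul']

/-!
Everything comes from `ε`-derivations, linear maps `d` with `d(xy) = ε(x) d(y) + ε(y) d(x)`.
Such a `d` kills `1` and `(ker ε)²`, so it factors through `Q(K)`; and `p : x ↦ [x - ε(x) 1]`
is itself an `ε`-derivation `K → Q(K)`.  For primitive `a`, the axiom for `◇(h ⊗ cc')` makes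
`◇(a ⊗ -)` an `ε`-derivation, which gives `ev`.  The map `(p ⊗ p) ∘ (Δ - τΔ)` is again an
`ε`-derivation, since expanding `(p ⊗ p)(Δx Δy)` by the derivation rule leaves, besides the
`ε`-linear terms, only the symmetric tensor `px ⊗ py + py ⊗ px`; this gives the cobracket `Υ`
with `Υ ∘ p = (p ⊗ p) ∘ (Δ - τΔ)`.  Antisymmetry and co-Jacobi are thereby pushed down from
`Δ - τΔ` on `K`, where co-Jacobi is coassociativity together with the identity
`(1 + ξ + ξ²)(1 - s)(1 - ξ²) = 0` in the group algebra of `S₃`.  The compatibility of `ev`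
with the brackets is the axiom for `◇(hh' ⊗ c)` applied to `ab` and `ba`.
-/

section CyclicPermutation

variable {M N : Type*} [AddCommGroup M] [Module k M] [AddCommGroup N] [Module k N]

@[simp]
lemma cyc_tmul (a b c : M) : cyc (k := k) (a ⊗ₜ[k] (b ⊗ₜ[k] c)) = c ⊗ₜ[k] (a ⊗ₜ[k] b) := by
  simp [cyc]

lemma cyc_comp_map (f : M →ₗ[k] N) :
    cyc ∘ₗ map f (map f f) = map f (map f f) ∘ₗ cyc (k := k) := by
  ext; simp

noncomputable def swap₁₂ (k M : Type*) [Field k] [AddCommGroup M] [Module k M] :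
    M ⊗[k] (M ⊗[k] M) →ₗ[k] M ⊗[k] (M ⊗[k] M) :=
  (TensorProduct.assoc k M M M).toLinearMap ∘ₗ
    (TensorProduct.comm k M M).toLinearMap.rTensor M ∘ₗ
      (TensorProduct.assoc k M M M).symm.toLinearMap

@[simp]
lemma swap₁₂_tmul (a b c : M) : swap₁₂ k M (a ⊗ₜ[k] (b ⊗ₜ[k] c)) = b ⊗ₜ[k] (a ⊗ₜ[k] c) := by
  simp [swap₁₂]

lemma assoc_comp_rTensor_comm :
    (TensorProduct.assoc k M M M).toLinearMap ∘ₗ (TensorProduct.comm k M M).toLinearMap.rTensor M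
      = swap₁₂ k M ∘ₗ (TensorProduct.assoc k M M M).toLinearMap := by
  ext; simp

lemma assoc_comp_comm :
    (TensorProduct.assoc k M M M).toLinearMap ∘ₗ (TensorProduct.comm k M (M ⊗[k] M)).toLinearMap
      = cyc ∘ₗ cyc (k := k) := by
  ext; simp

lemma cycSum_comp_id_sub_swap₁₂_comp_id_sub_cyc_cyc :
    (LinearMap.id + cyc + cyc ∘ₗ cyc) ∘ₗ (LinearMap.id - swap₁₂ k M) ∘ₗ
      (LinearMap.id - cyc ∘ₗ cyc) = 0 := by
  ext a b c
  simp only [AlgebraTensorModule.curry_apply, TensorProduct.curry_apply,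
    LinearMap.restrictScalars_self, LinearMap.comp_apply, LinearMap.add_apply, LinearMap.sub_apply,
    LinearMap.id_apply, LinearMap.zero_apply, map_sub, cyc_tmul, swap₁₂_tmul]
  abel

end CyclicPermutation

section LieCoalgebra

variable {C D : Type*} [AddCommGroup C] [Module k C] [AddCommGroup D] [Module k D]

noncomputable def coJacobiator (δ : C →ₗ[k] C ⊗[k] C) : C →ₗ[k] C ⊗[k] (C ⊗[k] C) :=
  (LinearMap.id + cyc + cyc ∘ₗ cyc) ∘ₗ (TensorProduct.assoc k C C C).toLinearMap ∘ₗ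
    map δ LinearMap.id ∘ₗ δ

lemma coJacobiator_comp {δ : C →ₗ[k] C ⊗[k] C} {Υ : D →ₗ[k] D ⊗[k] D} {f : C →ₗ[k] D}
    (h : Υ ∘ₗ f = map f f ∘ₗ δ) :
    coJacobiator Υ ∘ₗ f = map f (map f f) ∘ₗ coJacobiator δ := by
  have hΥ : map Υ LinearMap.id ∘ₗ map f f = map (map f f) f ∘ₗ map δ LinearMap.id := by
    rw [← map_comp, ← map_comp, h]; rfl
  have hassoc : (TensorProduct.assoc k D D D).toLinearMap ∘ₗ map (map f f) f
      = map f (map f f) ∘ₗ (TensorProduct.assoc k C C C).toLinearMap := by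
    ext; simp
  have hcyc : (LinearMap.id + cyc + cyc ∘ₗ cyc) ∘ₗ map f (map f f)
      = map f (map f f) ∘ₗ (LinearMap.id + cyc + cyc ∘ₗ cyc (k := k) (Q := C)) := by
    simp only [LinearMap.add_comp, LinearMap.comp_add, LinearMap.comp_assoc, cyc_comp_map,
      LinearMap.id_comp, LinearMap.comp_id]
    rw [← LinearMap.comp_assoc, cyc_comp_map, LinearMap.comp_assoc]
  calc coJacobiator Υ ∘ₗ f
      = (LinearMap.id + cyc + cyc ∘ₗ cyc) ∘ₗ (TensorProduct.assoc k D D D).toLinearMap ∘ₗ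
          (map Υ LinearMap.id ∘ₗ map f f) ∘ₗ δ := by
        simp only [coJacobiator, LinearMap.comp_assoc, h]
    _ = (LinearMap.id + cyc + cyc ∘ₗ cyc) ∘ₗ
          ((TensorProduct.assoc k D D D).toLinearMap ∘ₗ map (map f f) f) ∘ₗ
            map δ LinearMap.id ∘ₗ δ := by
        rw [hΥ]; rfl
    _ = ((LinearMap.id + cyc + cyc ∘ₗ cyc) ∘ₗ map f (map f f)) ∘ₗ
          (TensorProduct.assoc k C C C).toLinearMap ∘ₗ map δ LinearMap.id ∘ₗ δ := by
        rw [hassoc]; rfl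
    _ = map f (map f f) ∘ₗ coJacobiator δ := by
        rw [hcyc]; rfl

end LieCoalgebra

section AntiComul

noncomputable def antiComul (R C : Type*) [CommRing R] [AddCommGroup C] [Module R C]
    [Coalgebra R C] : C →ₗ[R] C ⊗[R] C :=
  comul - (TensorProduct.comm R C C).toLinearMap ∘ₗ comul

lemma comm_comp_antiComul {R C : Type*} [CommRing R] [AddCommGroup C] [Module R C]
    [Coalgebra R C] :
    (TensorProduct.comm R C C).toLinearMap ∘ₗ antiComul R C = -antiComul R C := by
  ext x
  simp [antiComul]

lemma coJacobiator_antiComul {C : Type*} [AddCommGroup C] [Module k C] [Coalgebra k C] :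
    coJacobiator (antiComul k C) = 0 := by
  have hswap (z : (C ⊗[k] C) ⊗[k] C) :
      TensorProduct.assoc k C C C ((TensorProduct.comm k C C).toLinearMap.rTensor C z)
        = swap₁₂ k C (TensorProduct.assoc k C C C z) :=
    congr($assoc_comp_rTensor_comm z)
  have hflip (y : C ⊗[k] C) :
      TensorProduct.assoc k C C C (comul.rTensor C (TensorProduct.comm k C C y))
        = cyc (cyc (comul.lTensor C y)) := by
    rw [LinearMap.rTensor_comm]
    exact congr($assoc_comp_comm (comul.lTensor C y))
  have hexpand (x : C) :
      TensorProduct.assoc k C C C (map (antiComul k C) LinearMap.id (antiComul k C x))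
        = ((LinearMap.id - swap₁₂ k C) ∘ₗ (LinearMap.id - cyc ∘ₗ cyc))
            (comul.lTensor C (comul x)) := by
    change TensorProduct.assoc k C C C ((antiComul k C).rTensor C (antiComul k C x)) = _
    simp only [antiComul, LinearMap.rTensor_sub, LinearMap.rTensor_comp, LinearMap.sub_apply,
      LinearMap.comp_apply, map_sub, LinearEquiv.coe_coe, hswap, hflip, coassoc_apply,
      LinearMap.id_apply]
  ext x
  simpa [coJacobiator, hexpand] using
    congr($cycSum_comp_id_sub_swap₁₂_comp_id_sub_cyc_cyc (comul.lTensor C (comul x)))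

end AntiComul

section CounitDerivation

variable {R A M : Type*} [CommRing R] [Ring A] [Bialgebra R A] [AddCommGroup M] [Module R M]

abbrev counitKer (R A : Type*) [CommRing R] [Ring A] [Bialgebra R A] : Submodule R A :=
  LinearMap.ker (counit (R := R) (A := A))

abbrev Indecomposables (R A : Type*) [CommRing R] [Ring A] [Bialgebra R A] : Type _ :=
  counitKer R A ⧸ (counitKer R A * counitKer R A).comap (counitKer R A).subtype

def IsCounitDerivation (d : A →ₗ[R] M) : Prop :=
  ∀ x y : A, d (x * y) = counit (R := R) x • d y + counit (R := R) y • d x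

namespace IsCounitDerivation

variable {d : A →ₗ[R] M}

lemma map_one (hd : IsCounitDerivation d) : d 1 = 0 := by
  simpa using hd 1 1

lemma counitKer_mul_counitKer_le_ker (hd : IsCounitDerivation d) :
    counitKer R A * counitKer R A ≤ LinearMap.ker d :=
  Submodule.mul_le.mpr fun x hx y hy => by
    rw [LinearMap.mem_ker] at hx hy ⊢
    rw [hd, hx, hy, zero_smul, zero_smul, add_zero]

/-- `lid (rTensor ε u)` and `rid (lTensor ε u)` contract one tensor factor of `u` with `ε`;
both are the identity on `u = Δ a`. -/
lemma map_map_mul (hd : IsCounitDerivation d) (u v : A ⊗[R] A) :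
    map d d (u * v)
      = counit (R := R) (TensorProduct.lid R A (counit.rTensor A u)) • map d d v
        + counit (R := R) (TensorProduct.lid R A (counit.rTensor A v)) • map d d u
        + d (TensorProduct.rid R A (counit.lTensor A u))
            ⊗ₜ d (TensorProduct.lid R A (counit.rTensor A v))
        + d (TensorProduct.rid R A (counit.lTensor A v))
            ⊗ₜ d (TensorProduct.lid R A (counit.rTensor A u)) := by
  induction u with
  | zero => simp
  | add u u' hu hu' =>
    simp only [add_mul, map_add, hu, hu', add_smul, smul_add, add_tmul, tmul_add]
    abel
  | tmul x y =>
    induction v with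
    | zero => simp
    | add v v' hv hv' =>
      simp only [mul_add, map_add, hv, hv', add_smul, smul_add, add_tmul, tmul_add]
      abel
    | tmul x' y' =>
      simp only [Algebra.TensorProduct.tmul_mul_tmul, map_tmul, hd x, hd y,
        LinearMap.rTensor_tmul, LinearMap.lTensor_tmul, lid_tmul, rid_tmul, map_smul,
        smul_eq_mul, smul_add, add_tmul, tmul_add, smul_tmul', tmul_smul, smul_smul, mul_comm]
      abel

lemma map_map_comul_mul (hd : IsCounitDerivation d) (a b : A) :
    map d d (comul (a * b))
      = counit (R := R) a • map d d (comul b) + counit (R := R) b • map d d (comul a)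
        + d a ⊗ₜ d b + d b ⊗ₜ d a := by
  simp [Bialgebra.comul_mul, hd.map_map_mul]

lemma map_map_comp_antiComul (hd : IsCounitDerivation d) :
    IsCounitDerivation (map d d ∘ₗ antiComul R A) := by
  intro x y
  simp only [antiComul, LinearMap.comp_apply, LinearMap.sub_apply, LinearEquiv.coe_coe, map_sub,
    map_comm, hd.map_map_comul_mul, map_add, map_smul, comm_tmul, smul_sub]
  abel

end IsCounitDerivation

namespace Indecomposables

noncomputable def toCounitKer (R A : Type*) [CommRing R] [Ring A] [Bialgebra R A] :
    A →ₗ[R] counitKer R A :=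
  (LinearMap.id - Algebra.linearMap R A ∘ₗ counit).codRestrict _ fun x => by
    simp [Algebra.algebraMap_eq_smul_one]

noncomputable def proj (R A : Type*) [CommRing R] [Ring A] [Bialgebra R A] :
    A →ₗ[R] Indecomposables R A :=
  Submodule.mkQ _ ∘ₗ toCounitKer R A

lemma toCounitKer_comp_subtype : toCounitKer R A ∘ₗ (counitKer R A).subtype = LinearMap.id := by
  ext x
  simp [toCounitKer, LinearMap.mem_ker.mp x.2]

lemma proj_comp_subtype : proj R A ∘ₗ (counitKer R A).subtype = Submodule.mkQ _ := by
  rw [proj, LinearMap.comp_assoc, toCounitKer_comp_subtype, LinearMap.comp_id]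

lemma proj_coe (x : counitKer R A) : proj R A x = Submodule.mkQ _ x :=
  congr($proj_comp_subtype x)

lemma proj_one : proj R A 1 = 0 := by
  simp [proj, toCounitKer]

lemma proj_mul_eq_zero {x y : A} (hx : x ∈ counitKer R A) (hy : y ∈ counitKer R A) :
    proj R A (x * y) = 0 := by
  have hxy : x * y ∈ counitKer R A := by
    rw [LinearMap.mem_ker] at hx ⊢
    rw [Bialgebra.counit_mul, hx, zero_mul]
  rw [← Subtype.coe_mk _ hxy, proj_coe, Submodule.mkQ_apply, Submodule.Quotient.mk_eq_zero]
  exact Submodule.mul_mem_mul hx hy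

lemma isCounitDerivation_proj : IsCounitDerivation (proj R A) := by
  intro x y
  set x₀ := (toCounitKer R A x : A)
  set y₀ := (toCounitKer R A y : A)
  have hxy : x * y = x₀ * y₀ + counit (R := R) x • y + counit (R := R) y • x
      - (counit (R := R) x * counit (R := R) y) • 1 := by
    simp only [x₀, y₀, toCounitKer, LinearMap.codRestrict_apply, LinearMap.sub_apply,
      LinearMap.id_apply, LinearMap.comp_apply, Algebra.linearMap_apply,
      Algebra.algebraMap_eq_smul_one, sub_mul, mul_sub, smul_mul_assoc, mul_smul_comm, one_mul,
      mul_one]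
    module
  rw [hxy, map_sub, map_add, map_add, map_smul, map_smul, map_smul, proj_one,
    proj_mul_eq_zero (toCounitKer R A x).2 (toCounitKer R A y).2]
  simp only [smul_zero, sub_zero, zero_add]

end Indecomposables

namespace IsCounitDerivation

variable {d : A →ₗ[R] M}

noncomputable def lift (hd : IsCounitDerivation d) : Indecomposables R A →ₗ[R] M :=
  Submodule.liftQ _ (d ∘ₗ (counitKer R A).subtype) fun _ hx =>
    LinearMap.mem_ker.mpr (hd.counitKer_mul_counitKer_le_ker hx)

@[simp]
lemma lift_mk (hd : IsCounitDerivation d) (x : counitKer R A) :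
    hd.lift (Submodule.Quotient.mk x) = d x :=
  rfl

lemma lift_comp_proj (hd : IsCounitDerivation d) : hd.lift ∘ₗ Indecomposables.proj R A = d := by
  ext x
  simp [Indecomposables.proj, Indecomposables.toCounitKer, Algebra.algebraMap_eq_smul_one,
    hd.map_one]

end IsCounitDerivation

namespace Indecomposables

noncomputable def liftFamily {X : Type*} [AddCommGroup X] [Module R X]
    (F : X →ₗ[R] A →ₗ[R] M) (hF : ∀ x, IsCounitDerivation (F x)) :
    X →ₗ[R] Indecomposables R A →ₗ[R] M where
  toFun x := (hF x).lift
  map_add' _ _ := Submodule.linearMap_qext _ (by ext; simp)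
  map_smul' _ _ := Submodule.linearMap_qext _ (by ext; simp)

noncomputable def cobracket (R A : Type*) [CommRing R] [Ring A] [Bialgebra R A] :
    Indecomposables R A →ₗ[R] Indecomposables R A ⊗[R] Indecomposables R A :=
  (isCounitDerivation_proj (R := R) (A := A)).map_map_comp_antiComul.lift

lemma cobracket_comp_proj :
    cobracket R A ∘ₗ proj R A = map (proj R A) (proj R A) ∘ₗ antiComul R A :=
  IsCounitDerivation.lift_comp_proj _

lemma cobracket_mk (x : counitKer R A) (y : counitKer R A ⊗[R] counitKer R A)
    (hy : map (counitKer R A).subtype (counitKer R A).subtype y = antiComul R A x) :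
    cobracket R A (Submodule.mkQ _ x) = map (Submodule.mkQ _) (Submodule.mkQ _) y := by
  change map (proj R A) (proj R A) (antiComul R A x) = _
  rw [← hy, ← LinearMap.comp_apply (map _ _), ← map_comp, proj_comp_subtype]

lemma comm_comp_cobracket :
    (TensorProduct.comm R _ _).toLinearMap ∘ₗ cobracket R A = -cobracket R A := by
  refine Submodule.linearMap_qext _ (LinearMap.ext fun x => ?_)
  have hanti := congr($(comm_comp_antiComul (R := R) (C := A)) (x : A))
  simp only [LinearMap.comp_apply, LinearEquiv.coe_coe, LinearMap.neg_apply] at hanti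
  simp [cobracket, ← map_comm, hanti]

lemma coJacobiator_cobracket {A : Type*} [Ring A] [Bialgebra k A] :
    coJacobiator (cobracket k A) = 0 := by
  have hjac := coJacobiator_comp (cobracket_comp_proj (R := k) (A := A))
  rw [coJacobiator_antiComul, LinearMap.comp_zero] at hjac
  refine Submodule.linearMap_qext _ ?_
  rw [← proj_comp_subtype, ← LinearMap.comp_assoc, hjac, LinearMap.zero_comp, LinearMap.zero_comp]

lemma lid_map_lift_cobracket_proj {d₁ d₂ : A →ₗ[R] R} (hd₁ : IsCounitDerivation d₁)
    (hd₂ : IsCounitDerivation d₂) (c : A) :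
    TensorProduct.lid R R (map hd₁.lift hd₂.lift (cobracket R A (proj R A c)))
      = TensorProduct.lid R R (map d₁ d₂ (comul c))
        - TensorProduct.lid R R (map d₂ d₁ (comul c)) := by
  rw [← LinearMap.comp_apply (cobracket R A), cobracket_comp_proj, LinearMap.comp_apply,
    ← LinearMap.comp_apply (map _ _), ← map_comp, hd₁.lift_comp_proj, hd₂.lift_comp_proj]
  simp only [antiComul, LinearMap.sub_apply, LinearMap.comp_apply, LinearEquiv.coe_coe, map_sub,
    map_comm, lid_comm]
  rw [lid_eq_rid]

end Indecomposables

end CounitDerivation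

section Primitives

variable {H : Type*} [Ring H] [Bialgebra k H]

lemma comul_of_mem_primitives {a : H} (ha : a ∈ primitives k H) :
    comul (R := k) a = a ⊗ₜ 1 + 1 ⊗ₜ a :=
  ha

lemma commutator_mem_primitives {a b : H} (ha : a ∈ primitives k H) (hb : b ∈ primitives k H) :
    a * b - b * a ∈ primitives k H := by
  change comul (R := k) (a * b - b * a) = _
  simp only [map_sub, Bialgebra.comul_mul, comul_of_mem_primitives ha, comul_of_mem_primitives hb,
    add_mul, mul_add, Algebra.TensorProduct.tmul_mul_tmul, one_mul, mul_one, sub_tmul, tmul_sub]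
  abel

lemma isCounitDerivation_of_mem_primitives {K : Type*} [Ring K] [Bialgebra k K]
    (D : H →ₗ[k] K →ₗ[k] k) (hD₁ : ∀ c : K, D 1 c = counit (R := k) c)
    (hD_mul : ∀ (h : H) (c c' : K), D h (c * c')
      = TensorProduct.lid k k (map (D.flip c) (D.flip c') (comul (R := k) h)))
    {a : H} (ha : a ∈ primitives k H) : IsCounitDerivation (D a) := by
  intro c c'
  simp only [hD_mul, comul_of_mem_primitives ha, map_add, map_tmul, LinearMap.flip_apply, hD₁,
    lid_tmul, smul_eq_mul]
  ring

end Primitives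

theorem stmt18_general {H K : Type*} [Ring H] [Bialgebra k H] [Ring K] [Bialgebra k K]
    (D : H →ₗ[k] K →ₗ[k] k)
    (h2 : ∀ c : K, D 1 c = counit (R := k) c)
    (h3 : ∀ (h h' : H) (c : K), D (h * h') c
      = (TensorProduct.lid k k) (TensorProduct.map (D h) (D h') (comul (R := k) c)))
    (h4 : ∀ (h : H) (c c' : K), D h (c * c')
      = (TensorProduct.lid k k)
          (TensorProduct.map (D.flip c) (D.flip c') (comul (R := k) h))) :
    letI P : Submodule k H := primitives k H
    letI I : Submodule k K := LinearMap.ker (counit (R := k) (A := K))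
    letI I2 : Submodule k K := I * I
    letI DK : K →ₗ[k] K ⊗[k] K :=
      comul - (TensorProduct.comm k K K).toLinearMap ∘ₗ comul
    letI QK := ↥I ⧸ Submodule.comap I.subtype I2
    letI π : ↥I →ₗ[k] QK := (Submodule.comap I.subtype I2).mkQ
    -- `P(H)` is closed under the commutator bracket (a Lie algebra):
    (∀ a b : ↥P, a.1 * b.1 - b.1 * a.1 ∈ P) ∧
    ∃ (Υ : QK →ₗ[k] QK ⊗[k] QK) (ev : ↥P →ₗ[k] QK →ₗ[k] k),
      -- `Υ` is the cobracket induced on `Q(K)` by `Δ − τΔ`: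
      (∀ (x : ↥I) (y : ↥I ⊗[k] ↥I),
        TensorProduct.map I.subtype I.subtype y = DK x.1 →
          Υ (π x) = TensorProduct.map π π y) ∧
      -- `(Q(K), Υ)` is a Lie coalgebra:
      ((TensorProduct.comm k QK QK).toLinearMap ∘ₗ Υ = -Υ) ∧
      ((LinearMap.id + cyc (k := k) + cyc ∘ₗ cyc) ∘ₗ
        (TensorProduct.assoc k QK QK QK).toLinearMap ∘ₗ
          TensorProduct.map Υ LinearMap.id ∘ₗ Υ = 0) ∧
      -- `ev` is the pairing induced by `◇` (in particular `◇` descends):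
      (∀ (p : ↥P) (c : ↥I), ev p (π c) = D p.1 c.1) ∧
      -- the Michaelis pair compatibility:
      (∀ (a b : ↥P) (hab : a.1 * b.1 - b.1 * a.1 ∈ P) (q : QK),
        ev ⟨a.1 * b.1 - b.1 * a.1, hab⟩ q
          = (TensorProduct.lid k k) (TensorProduct.map (ev a) (ev b) (Υ q))) := by
  have hD (a : primitives k H) : IsCounitDerivation (D a) :=
    isCounitDerivation_of_mem_primitives D h2 h4 a.2
  refine ⟨fun a b => commutator_mem_primitives a.2 b.2, Indecomposables.cobracket k K,
    Indecomposables.liftFamily (D ∘ₗ (primitives k H).subtype) hD, Indecomposables.cobracket_mk,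
    Indecomposables.comm_comp_cobracket, Indecomposables.coJacobiator_cobracket,
    fun _ _ => rfl, fun a b hab q => ?_⟩
  obtain ⟨c, rfl⟩ := Submodule.mkQ_surjective _ q
  change D (a * b - b * a) c = TensorProduct.lid k k
    (map (hD a).lift (hD b).lift (Indecomposables.cobracket k K (Submodule.mkQ _ c)))
  rw [← Indecomposables.proj_coe, Indecomposables.lid_map_lift_cobracket_proj, ← h3, ← h3,
    map_sub, LinearMap.sub_apply]

/-- Let `(H, K, ◇)` be a Takeuchi pair of bialgebras over a field `k`.  Then the
restriction of `◇` to `P(H) ⊗ K` descends through the quotient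
`K → Q(K) = ker ε / (ker ε)²`, yielding a well-defined pairing
`ev : P(H) ⊗ Q(K) → k` satisfying `ev([a,b] ⊗ q) = Σ ev(a ⊗ q⁽¹⁾) ev(b ⊗ q⁽²⁾)`,
where the cobracket on `Q(K)` is induced by `Δ − τΔ`.  That is,
`(P(H), Q(K), ev)` is a Michaelis pair. -/
theorem stmt18 {H K : Type*} [Ring H] [Bialgebra k H] [Ring K] [Bialgebra k K]
    (D : H →ₗ[k] K →ₗ[k] k)
    (h1 : ∀ h : H, D h 1 = counit (R := k) h)
    (h2 : ∀ c : K, D 1 c = counit (R := k) c)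
    (h3 : ∀ (h h' : H) (c : K), D (h * h') c
      = (TensorProduct.lid k k) (TensorProduct.map (D h) (D h') (comul (R := k) c)))
    (h4 : ∀ (h : H) (c c' : K), D h (c * c')
      = (TensorProduct.lid k k)
          (TensorProduct.map (D.flip c) (D.flip c') (comul (R := k) h))) :
    letI P : Submodule k H := primitives k H
    letI I : Submodule k K := LinearMap.ker (counit (R := k) (A := K))
    letI I2 : Submodule k K := I * I
    letI DK : K →ₗ[k] K ⊗[k] K :=
      comul - (TensorProduct.comm k K K).toLinearMap ∘ₗ comul
    letI QK := ↥I ⧸ Submodule.comap I.subtype I2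
    letI π : ↥I →ₗ[k] QK := (Submodule.comap I.subtype I2).mkQ
    -- `P(H)` is closed under the commutator bracket (a Lie algebra):
    (∀ a b : ↥P, a.1 * b.1 - b.1 * a.1 ∈ P) ∧
    ∃ (Υ : QK →ₗ[k] QK ⊗[k] QK) (ev : ↥P →ₗ[k] QK →ₗ[k] k),
      -- `Υ` is the cobracket induced on `Q(K)` by `Δ − τΔ`:
      (∀ (x : ↥I) (y : ↥I ⊗[k] ↥I),
        TensorProduct.map I.subtype I.subtype y = DK x.1 →
          Υ (π x) = TensorProduct.map π π y) ∧
      -- `(Q(K), Υ)` is a Lie coalgebra: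
      ((TensorProduct.comm k QK QK).toLinearMap ∘ₗ Υ = -Υ) ∧
      ((LinearMap.id + cyc (k := k) + cyc ∘ₗ cyc) ∘ₗ
        (TensorProduct.assoc k QK QK QK).toLinearMap ∘ₗ
          TensorProduct.map Υ LinearMap.id ∘ₗ Υ = 0) ∧
      -- `ev` is the pairing induced by `◇` (in particular `◇` descends):
      (∀ (p : ↥P) (c : ↥I), ev p (π c) = D p.1 c.1) ∧
      -- the Michaelis pair compatibility:
      (∀ (a b : ↥P) (hab : a.1 * b.1 - b.1 * a.1 ∈ P) (q : QK),
        ev ⟨a.1 * b.1 - b.1 * a.1, hab⟩ q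
          = (TensorProduct.lid k k) (TensorProduct.map (ev a) (ev b) (Υ q))) :=
  stmt18_general D h2 h3 h4
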